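/- arXiv:1606.03608 — 3 statements merged into one kernel-verified Lean document; each statement's English description precedes it below -/
import Mathlib

section
/- Let $d = 2k$ and let $A$ be a $d \times d$ integer matrix of the form $A = B + 4C + 4C^T$, where $C$ is upper triangular and $B$ is a block diagonal sum of $k$ blocks $D_i = \begin{pmatrix} x_i & 1 \\ 1 & 1 + y_i \end{pmatrix}$ with each $x_i$ and $y_i$ divisible by $4$. Then $\det A \equiv (-1)^k + \sum_{i=1}^k x_i \pmod 8$. -/
/-!
Expanding the determinant multilinearly in the rows gives
`det (B + 4N) ≡ det B + 4 tr (N adj B) [ZMOD 16]`. For `N = C + Cᵀ` and `B` symmetric, `adj B` is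
symmetric too, so `tr (N adj B) = 2 tr (C adj B)` and `det A ≡ det B [ZMOD 8]`. After reordering
the indices as `i ↦ (i % 2, i / 2)`, `B` is block diagonal with blocks `!![xᵢ, 1; 1, 1 + yᵢ]`, so
`det B = ∏ (-1 + xᵢ (1 + yᵢ))`; modulo 8, a product of numbers `-1 + uᵢ` with `4 ∣ uᵢ` is
`(-1)^k + ∑ uᵢ`, and `∑ xᵢ yᵢ ≡ 0`.
-/

open Matrix Finset

theorem MultilinearMap.sq_dvd_map_add_smul_sub_linearDeriv {R ι : Type*} {M : ι → Type*}
    [CommRing R] [∀ i, AddCommGroup (M i)] [∀ i, Module R (M i)] [DecidableEq ι] [Fintype ι]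
    (f : MultilinearMap R M R) (x h : ∀ i, M i) (a : R) :
    a ^ 2 ∣ f (x + a • h) - f x - a * f.linearDeriv x h := by
  rw [map_add_eq_map_add_linearDeriv_add, map_smul, smul_eq_mul, add_assoc, add_sub_cancel_left,
    add_sub_cancel_left]
  refine dvd_sum fun s hs => ?_
  have hpiece : s.piecewise (a • h) x =
      s.piecewise (fun i => a • s.piecewise h x i) (s.piecewise h x) := by
    ext i
    by_cases hi : i ∈ s <;> simp [hi]
  rw [hpiece, map_piecewise_smul, prod_const, smul_eq_mul]
  exact dvd_mul_of_dvd_left (pow_dvd_pow a (mem_filter.1 hs).2) _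

namespace Matrix

theorem IsSymm.blockDiagonal {α m o : Type*} [Zero α] [DecidableEq o] {D : o → Matrix m m α}
    (hD : ∀ q, (D q).IsSymm) : (blockDiagonal D).IsSymm := by
  rw [IsSymm, blockDiagonal_transpose]
  exact congrArg _ (funext fun q => hD q)

variable {n R : Type*} [Fintype n] [DecidableEq n] [CommRing R]

theorem sum_det_updateRow_eq_trace_mul_adjugate (A N : Matrix n n R) :
    ∑ i, (A.updateRow i (N i)).det = trace (N * A.adjugate) := by
  simp [← cramer_transpose_apply, cramer_eq_adjugate_mulVec, ← adjugate_transpose, trace,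
    mulVec, dotProduct, mul_apply, mul_comm]

theorem sq_dvd_det_add_smul_sub (A N : Matrix n n R) (a : R) :
    a ^ 2 ∣ (A + a • N).det - A.det - a * trace (N * A.adjugate) := by
  have hderiv : detRowAlternating.toMultilinearMap.linearDeriv A N =
      ∑ i, (A.updateRow i (N i)).det :=
    MultilinearMap.linearDeriv_apply _ _ _
  rw [← sum_det_updateRow_eq_trace_mul_adjugate, ← hderiv]
  exact detRowAlternating.toMultilinearMap.sq_dvd_map_add_smul_sub_linearDeriv A N a

theorem IsSymm.trace_add_transpose_mul {M : Matrix n n R} (hM : M.IsSymm) (C : Matrix n n R) :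
    trace ((C + Cᵀ) * M) = 2 * trace (C * M) := by
  rw [add_mul, trace_add, two_mul, ← trace_transpose (Cᵀ * M), transpose_mul, transpose_transpose,
    hM.eq, trace_mul_comm]

theorem IsSymm.det_add_four_smul_add_transpose_modEq {A : Matrix n n ℤ} (hA : A.IsSymm)
    (C : Matrix n n ℤ) : (A + (4 : ℤ) • (C + Cᵀ)).det ≡ A.det [ZMOD 8] := by
  obtain ⟨c, hc⟩ := sq_dvd_det_add_smul_sub A (C + Cᵀ) 4
  rw [hA.adjugate.trace_add_transpose_mul] at hc
  exact Int.modEq_iff_dvd.2 ⟨-(2 * c + trace (C * A.adjugate)), by linear_combination -hc⟩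

end Matrix

@[simps]
def finTwoMulEquiv (k : ℕ) : Fin (2 * k) ≃ Fin 2 × Fin k where
  toFun i := (⟨i % 2, by omega⟩, ⟨i / 2, by omega⟩)
  invFun p := ⟨2 * p.2 + p.1, by omega⟩
  left_inv i := by ext; simp; omega
  right_inv p := by ext <;> simp <;> omega

theorem Int.prod_neg_one_add_modEq {ι : Type*} (s : Finset ι) (u : ι → ℤ)
    (hu : ∀ i ∈ s, 4 ∣ u i) :
    ∏ i ∈ s, (-1 + u i) ≡ (-1) ^ #s + ∑ i ∈ s, u i [ZMOD 8] := by
  classical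
  induction s using Finset.induction_on with
  | empty => simp
  | insert a s ha ih =>
    rw [prod_insert ha, sum_insert ha, card_insert_of_notMem ha, pow_succ]
    obtain ⟨p, hp⟩ := hu a (mem_insert_self a s)
    obtain ⟨q, hq⟩ := dvd_sum fun i hi => hu i (mem_insert_of_mem hi)
    refine ((ih fun i hi => hu i (mem_insert_of_mem hi)).mul_left _).trans ?_
    rw [hp, hq]
    rcases neg_one_pow_eq_or ℤ #s with h | h <;> rw [h] <;> apply Int.modEq_iff_dvd.2
    · exact ⟨-2 * p * q + q, by ring⟩
    · exact ⟨-2 * p * q + q + p, by ring⟩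

/-- Lemma `levine-argument-modified`: det A ≡ (-1)^k + ∑ xᵢ mod 8. -/
theorem det_block_congruence (k : ℕ) (x y : Fin k → ℤ)
    (hx : ∀ i, (4 : ℤ) ∣ x i) (hy : ∀ i, (4 : ℤ) ∣ y i)
    (B C A : Matrix (Fin (2 * k)) (Fin (2 * k)) ℤ)
    (hB : ∀ i j : Fin (2 * k), B i j =
      if i = j then
        (if (i : ℕ) % 2 = 0 then x ⟨(i : ℕ) / 2, by have := i.isLt; omega⟩
         else 1 + y ⟨(i : ℕ) / 2, by have := i.isLt; omega⟩)
      else if (i : ℕ) / 2 = (j : ℕ) / 2 then 1 else 0)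
    (hA : A = B + (4 : ℤ) • C + (4 : ℤ) • Cᵀ) :
    A.det ≡ (-1) ^ k + ∑ i, x i [ZMOD 8] := by
  set D : Fin k → Matrix (Fin 2) (Fin 2) ℤ := fun q => !![x q, 1; 1, 1 + y q]
  have hBD : B = (blockDiagonal D).submatrix (finTwoMulEquiv k) (finTwoMulEquiv k) := by
    ext i j
    rw [hB, submatrix_apply, blockDiagonal_apply]
    simp only [finTwoMulEquiv_apply, Fin.ext_iff]
    rcases Nat.mod_two_eq_zero_or_one i with hi | hi <;>
      rcases Nat.mod_two_eq_zero_or_one j with hj | hj <;> simp [D, hi, hj] <;> omega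
  have hDsymm (q : Fin k) : (D q).IsSymm := by
    ext r s
    fin_cases r <;> fin_cases s <;> rfl
  have hBsymm : B.IsSymm := hBD ▸ (IsSymm.blockDiagonal hDsymm).submatrix _
  have hdetB : B.det = ∏ q, (-1 + x q * (1 + y q)) := by
    rw [hBD, det_submatrix_equiv_self, det_blockDiagonal]
    simp [D, det_fin_two_of, sub_eq_neg_add]
  have hsum : ∑ q, x q * (1 + y q) ≡ ∑ q, x q [ZMOD 8] := by
    have h8 : 8 ∣ ∑ q, x q * y q :=
      dvd_sum fun q _ => (by norm_num : (8 : ℤ) ∣ 4 * 4).trans (mul_dvd_mul (hx q) (hy q))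
    simpa [mul_one_add, sum_add_distrib] using (Int.modEq_zero_iff_dvd.2 h8).add_left (∑ q, x q)
  calc A.det = (B + (4 : ℤ) • (C + Cᵀ)).det := by rw [hA, smul_add, add_assoc]
    _ ≡ B.det [ZMOD 8] := hBsymm.det_add_four_smul_add_transpose_modEq C
    _ = ∏ q, (-1 + x q * (1 + y q)) := hdetB
    _ ≡ (-1) ^ k + ∑ q, x q * (1 + y q) [ZMOD 8] := by
      simpa using Int.prod_neg_one_add_modEq univ _ fun q _ => (hx q).mul_right _
    _ ≡ (-1) ^ k + ∑ q, x q [ZMOD 8] := hsum.add_left _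
end

section
/- Suppose $g(t), \Delta(t), f(t) \in \mathbb{Z}[t,t^{-1}]$ satisfy $g(t) = \Delta(t) \cdot f(t) \cdot f(t^{-1})$ and $f(1) = \pm 1$. Then $g(-1) \equiv \Delta(-1) \pmod 8$. -/
/-! Evaluation at a unit of ℤ is invariant under `t ↦ t⁻¹` (units of ℤ are self-inverse), so
`g(-1) = Δ(-1) f(-1)²`. Every unit of ℤ is odd, so `f(-1) ≡ f(1) ≡ 1 mod 2`, and the square of an
odd integer is `1 mod 8`. -/

open LaurentPolynomial

noncomputable def laurentEval (u : ℤˣ) : LaurentPolynomial ℤ →ₐ[ℤ] ℤ :=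
  AddMonoidAlgebra.lift ℤ ℤ ℤ ((Units.coeHom ℤ).comp (zpowersHom ℤˣ u))

lemma laurentEval_T (u : ℤˣ) (n : ℤ) : laurentEval u (T n) = ((u ^ n : ℤˣ) : ℤ) := by
  rw [laurentEval, T, AddMonoidAlgebra.lift_single]
  simp [zpowersHom_apply]

lemma laurentEval_invert (u : ℤˣ) (f : LaurentPolynomial ℤ) :
    laurentEval u (invert f) = laurentEval u f := by
  suffices (laurentEval u).comp invert.toAlgHom = laurentEval u from congr($this f)
  apply AddMonoidAlgebra.algHom_ext
  · intro n
    show laurentEval u (invert (T n)) = laurentEval u (T n)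
    rw [invert_T, laurentEval_T, laurentEval_T, zpow_neg, Int.units_inv_eq_self]
  · exact Subsingleton.elim _ _

lemma laurentEval_modEq_two (u v : ℤˣ) (f : LaurentPolynomial ℤ) :
    laurentEval u f ≡ laurentEval v f [ZMOD 2] := by
  let π := (Int.castRingHom (ZMod 2)).toIntAlgHom
  suffices π.comp (laurentEval u) = π.comp (laurentEval v) from
    (ZMod.intCast_eq_intCast_iff _ _ _).mp congr($this f)
  have unit_cast (w : ℤˣ) : ((w : ℤ) : ZMod 2) = 1 := by
    rcases Int.units_eq_one_or w with rfl | rfl <;> decide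
  apply AddMonoidAlgebra.algHom_ext
  · intro n
    show ((laurentEval u (T n) : ℤ) : ZMod 2) = ((laurentEval v (T n) : ℤ) : ZMod 2)
    rw [laurentEval_T, laurentEval_T, unit_cast, unit_cast]
  · exact Subsingleton.elim _ _

/-- If `g(t) = Δ(t) f(t) f(t⁻¹)` with `f(1) = ±1`, then `g(-1) ≡ Δ(-1) mod 8`. -/
theorem eval_neg_one_mod_eight (g Δ f : LaurentPolynomial ℤ)
    (hg : g = Δ * f * LaurentPolynomial.invert f)
    (hf : laurentEval 1 f = 1 ∨ laurentEval 1 f = -1) :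
    laurentEval (-1) g ≡ laurentEval (-1) Δ [ZMOD 8] := by
  have hodd : Odd (laurentEval (-1) f) := by
    rw [Int.odd_iff, laurentEval_modEq_two (-1) 1 f]
    rcases hf with h | h <;> rw [h] <;> rfl
  have hg_eval : laurentEval (-1) g = laurentEval (-1) Δ * laurentEval (-1) f ^ 2 := by
    rw [hg, map_mul, map_mul, laurentEval_invert, mul_assoc, sq]
  rw [hg_eval, Int.modEq_comm, Int.modEq_iff_dvd, ← mul_sub_one]
  exact dvd_mul_of_dvd_right (Int.eight_dvd_sq_sub_one_of_odd hodd) _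
end

section
/- Let $V$ be a $\mathbb{Z}/2$-vector space with symmetric bilinear form $\lambda$ and quadratic enhancement $q$, and suppose $\{e_1, f_1, \dots, e_n, f_n\}$ is a symplectic basis, i.e., $\lambda(e_i, e_j) = 0 = \lambda(f_i, f_j)$ and $\lambda(e_i, f_j) = \delta_{ij}$. Then the Arf invariant $\mathrm{Arf}(V, \lambda, q) := \sum_{i=1}^n q(e_i) q(f_i) \in \mathbb{Z}/2$ is independent of the choice of symplectic basis. -/
/-!
Over `ℤ/2` the Arf invariant is the value taken by `q` on the majority of vectors: with
`ε(t) = (-1)^t`, the Gauss sum `∑_{v ∈ V} ε(q v)` equals `2ⁿ ε(Arf)`. Indeed, in the coordinates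
`v = ∑ cᵢ eᵢ + dᵢ fᵢ` of a symplectic basis, `q v = ∑ (cᵢ q(eᵢ) + dᵢ q(fᵢ) + cᵢ dᵢ)`, so the sum
factors over the hyperbolic planes, each contributing `2 ε(q(eᵢ) q(fᵢ))`. The Gauss sum does
not mention the basis.
-/

open Finset

lemma AddChar.map_sum_eq_prod {A M ι : Type*} [AddCommMonoid A] [CommMonoid M] (ψ : AddChar A M)
    (s : Finset ι) (f : ι → A) : ψ (∑ i ∈ s, f i) = ∏ i ∈ s, ψ (f i) :=
  map_prod ψ.toMonoidHom (fun i => Multiplicative.ofAdd (f i)) s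

def signChar : AddChar (ZMod 2) ℤ where
  toFun t := if t = 0 then 1 else -1
  map_zero_eq_one' := rfl
  map_add_eq_mul' := by decide

lemma signChar_injective : Function.Injective signChar := by
  intro s t
  revert s t
  decide

lemma sum_signChar_hyperbolic (u v : ZMod 2) :
    ∑ p : ZMod 2 × ZMod 2, signChar (p.1 * u + p.2 * v + p.1 * p.2) = 2 * signChar (u * v) := by
  revert u v
  decide

lemma sum_sumElim_prod {ι R M : Type*} [Fintype ι] [DecidableEq ι] [Fintype R]
    [CommSemiring M] (F : ι → R × R → M) :
    ∑ c : ι ⊕ ι → R, ∏ i, F i (c (Sum.inl i), c (Sum.inr i)) = ∏ i, ∑ p, F i p := by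
  rw [Fintype.prod_sum]
  exact Fintype.sum_equiv ((Equiv.sumArrowEquivProdArrow ι ι R).trans
    (Equiv.arrowProdEquivProdArrow ι (fun _ => R) (fun _ => R)).symm) _ _ fun _ => rfl

lemma Module.Basis.sum_comp_equivFun_symm {ι K V M : Type*} [Fintype ι] [DecidableEq ι] [Fintype K]
    [Semiring K] [AddCommMonoid V] [Module K V] [AddCommMonoid M]
    (b b' : Module.Basis ι K V) (f : V → M) :
    ∑ c, f (b.equivFun.symm c) = ∑ c, f (b'.equivFun.symm c) :=
  Fintype.sum_equiv (b.equivFun.symm.trans b'.equivFun).toEquiv _ _ fun c => by simp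

def IsQuadraticEnhancement {V : Type*} [AddCommGroup V] [Module (ZMod 2) V]
    (B : V →ₗ[ZMod 2] V →ₗ[ZMod 2] ZMod 2) (q : V → ZMod 2) : Prop :=
  ∀ x y, q x + q y + q (x + y) = B x y

structure IsSymplecticBasis {ι V : Type*} [AddCommGroup V] [Module (ZMod 2) V] [DecidableEq ι]
    (B : V →ₗ[ZMod 2] V →ₗ[ZMod 2] ZMod 2) (b : Module.Basis (ι ⊕ ι) (ZMod 2) V) : Prop where
  inl_inl : ∀ i j, B (b (Sum.inl i)) (b (Sum.inl j)) = 0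
  inr_inr : ∀ i j, B (b (Sum.inr i)) (b (Sum.inr j)) = 0
  inl_inr : ∀ i j, B (b (Sum.inl i)) (b (Sum.inr j)) = if i = j then 1 else 0

def arf {ι V : Type*} [Fintype ι] (q : V → ZMod 2) (b : ι ⊕ ι → V) : ZMod 2 :=
  ∑ i, q (b (Sum.inl i)) * q (b (Sum.inr i))

section

variable {V : Type*} [AddCommGroup V] [Module (ZMod 2) V]
  {B : V →ₗ[ZMod 2] V →ₗ[ZMod 2] ZMod 2} {q : V → ZMod 2}

namespace IsQuadraticEnhancement

variable (hq : IsQuadraticEnhancement B q)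
include hq

lemma map_add (x y : V) : q (x + y) = q x + q y + B x y := by
  grind [hq x y]

lemma map_zero : q 0 = 0 := by
  simpa using hq.map_add 0 0

lemma map_smul (c : ZMod 2) (v : V) : q (c • v) = c * q v := by
  obtain rfl | rfl : c = 0 ∨ c = 1 := by revert c; decide
  · simpa using hq.map_zero
  · simp

lemma map_sum_of_isotropic {ι : Type*} (s : Finset ι) (v : ι → V)
    (hv : ∀ i j, B (v i) (v j) = 0) (c : ι → ZMod 2) :
    q (∑ i ∈ s, c i • v i) = ∑ i ∈ s, c i * q (v i) := by
  classical
  induction s using Finset.induction_on with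
  | empty => simpa using hq.map_zero
  | insert a s ha ih =>
    have hB : B (c a • v a) (∑ i ∈ s, c i • v i) = 0 := by simp [hv]
    rw [sum_insert ha, sum_insert ha, hq.map_add, ih, hB, hq.map_smul, add_zero]

end IsQuadraticEnhancement

namespace IsSymplecticBasis

variable {ι : Type*} [Fintype ι] [DecidableEq ι] {b : Module.Basis (ι ⊕ ι) (ZMod 2) V}
  (hb : IsSymplecticBasis B b)
include hb

lemma apply_equivFun_symm (hq : IsQuadraticEnhancement B q) (c : ι ⊕ ι → ZMod 2) :
    q (b.equivFun.symm c) = ∑ i, (c (.inl i) * q (b (.inl i)) + c (.inr i) * q (b (.inr i)) +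
      c (.inl i) * c (.inr i)) := by
  have hB : B (∑ i, c (.inl i) • b (.inl i)) (∑ i, c (.inr i) • b (.inr i)) =
      ∑ i, c (.inl i) * c (.inr i) := by
    simp [hb.inl_inr, mul_comm]
  rw [Module.Basis.equivFun_symm_apply, Fintype.sum_sum_type, hq.map_add,
    hq.map_sum_of_isotropic _ _ hb.inl_inl, hq.map_sum_of_isotropic _ _ hb.inr_inr, hB,
    ← sum_add_distrib, ← sum_add_distrib]

lemma sum_signChar (hq : IsQuadraticEnhancement B q) :
    ∑ c, signChar (q (b.equivFun.symm c)) = 2 ^ Fintype.card ι * signChar (arf q b) := by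
  simp only [hb.apply_equivFun_symm hq, AddChar.map_sum_eq_prod]
  refine (sum_sumElim_prod fun i p =>
    signChar (p.1 * q (b (.inl i)) + p.2 * q (b (.inr i)) + p.1 * p.2)).trans ?_
  simp only [sum_signChar_hyperbolic, prod_mul_distrib, prod_const, card_univ, arf,
    AddChar.map_sum_eq_prod]

end IsSymplecticBasis

end

/-- The Arf invariant `∑ q(eᵢ)q(fᵢ)` of a quadratic form over `ℤ/2` is
independent of the choice of symplectic basis. -/
theorem arf_invariant_well_defined (V : Type*) [AddCommGroup V]
    [Module (ZMod 2) V] (n : ℕ)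
    (B : V →ₗ[ZMod 2] V →ₗ[ZMod 2] ZMod 2)
    (q : V → ZMod 2)
    (hq : ∀ x y, q x + q y + q (x + y) = B x y)
    (b b' : Module.Basis (Fin n ⊕ Fin n) (ZMod 2) V)
    (hb₁ : ∀ i j, B (b (Sum.inl i)) (b (Sum.inl j)) = 0)
    (hb₂ : ∀ i j, B (b (Sum.inr i)) (b (Sum.inr j)) = 0)
    (hb₃ : ∀ i j, B (b (Sum.inl i)) (b (Sum.inr j)) = if i = j then 1 else 0)
    (hb'₁ : ∀ i j, B (b' (Sum.inl i)) (b' (Sum.inl j)) = 0)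
    (hb'₂ : ∀ i j, B (b' (Sum.inr i)) (b' (Sum.inr j)) = 0)
    (hb'₃ : ∀ i j, B (b' (Sum.inl i)) (b' (Sum.inr j)) = if i = j then 1 else 0) :
    ∑ i, q (b (Sum.inl i)) * q (b (Sum.inr i)) =
      ∑ i, q (b' (Sum.inl i)) * q (b' (Sum.inr i)) := by
  have gauss := (IsSymplecticBasis.sum_signChar ⟨hb₁, hb₂, hb₃⟩ hq).symm.trans
    ((b.sum_comp_equivFun_symm b' fun v => signChar (q v)).trans
      (IsSymplecticBasis.sum_signChar ⟨hb'₁, hb'₂, hb'₃⟩ hq))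
  exact signChar_injective (mul_left_cancel₀ (by positivity) gauss)
end
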